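/- arXiv:2401.06419 — 2 statements merged into one kernel-verified Lean document; each statement's English description precedes it below -/
import Mathlib

section
/- The function g(y) = y(2^{1/y} - 1) is strictly convex on (0, ∞). -/
noncomputable def g (y : ℝ) : ℝ := y * ((2 : ℝ) ^ (1 / y) - 1)

/-!
`g y = y * f (1 / y)` for the strictly convex `f x = 2 ^ x - 1`, and the perspective
`y ↦ y * f (1 / y)` of a strictly convex function is again strictly convex.
-/

open Set Real

theorem strictConvexOn_rpow_left {b : ℝ} (hb₀ : 0 < b) (hb₁ : b ≠ 1) :
    StrictConvexOn ℝ univ fun x : ℝ ↦ b ^ x := by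
  refine ⟨convex_univ, fun x _ y _ hxy a c ha hc hac ↦ ?_⟩
  have hlog : log b ≠ 0 := log_ne_zero_of_pos_of_ne_one hb₀ hb₁
  have hne : log b * x ≠ log b * y := (mul_right_injective₀ hlog).ne hxy
  simp only [rpow_def_of_pos hb₀, smul_eq_mul]
  calc exp (log b * (a * x + c * y)) = exp (a • (log b * x) + c • (log b * y)) := by
        simp only [smul_eq_mul]; ring_nf
    _ < a • exp (log b * x) + c • exp (log b * y) :=
        strictConvexOn_exp.2 trivial trivial hne ha hc hac

/-- `1 / (a x + c y)` is the convex combination of `1 / x` and `1 / y` with weights proportional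
to `a x` and `c y`. -/
theorem StrictConvexOn.mul_comp_inv {f : ℝ → ℝ} (hf : StrictConvexOn ℝ (Ioi 0) f) :
    StrictConvexOn ℝ (Ioi 0) fun y ↦ y * f y⁻¹ := by
  refine ⟨convex_Ioi 0, fun x (hx : 0 < x) y (hy : 0 < y) hxy a c ha hc hac ↦ ?_⟩
  simp only [smul_eq_mul]
  set z := a * x + c * y
  have hz : 0 < z := by positivity
  have hweights : a * x / z + c * y / z = 1 := by rw [← add_div, div_self hz.ne']
  have hcomb : (a * x / z) • x⁻¹ + (c * y / z) • y⁻¹ = z⁻¹ := by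
    simp only [smul_eq_mul]; field_simp; rw [hac]
  have hlt := hf.2 (inv_pos.2 hx) (inv_pos.2 hy) (inv_injective.ne hxy)
    (by positivity : 0 < a * x / z) (by positivity : 0 < c * y / z) hweights
  rw [hcomb, smul_eq_mul, smul_eq_mul] at hlt
  calc z * f z⁻¹ < z * (a * x / z * f x⁻¹ + c * y / z * f y⁻¹) := mul_lt_mul_of_pos_left hlt hz
    _ = a * (x * f x⁻¹) + c * (y * f y⁻¹) := by field_simp

theorem stmt_1 : StrictConvexOn ℝ (Set.Ioi (0 : ℝ)) g := by
  have hpow : StrictConvexOn ℝ (Ioi 0) fun x : ℝ ↦ (2 : ℝ) ^ x - 1 :=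
    ((strictConvexOn_rpow_left two_pos (by norm_num)).subset (subset_univ _)
      (convex_Ioi 0)).add_const (-1)
  exact hpow.mul_comp_inv.congr fun y _ ↦ by simp only [g, one_div]
end

section
/- The derivative g'(y) = 2^{1/y}(1 - (ln 2)/y) - 1 is negative for all y ∈ (0, ln 2], so g is strictly decreasing on (0, ln 2]. -/
open Real

lemma hasDerivAt_g {y : ℝ} (hy : y ≠ 0) :
    HasDerivAt g ((2 : ℝ) ^ (1 / y) * (1 - log 2 / y) - 1) y := by
  have hinv : HasDerivAt (fun x : ℝ => 1 / x) (-(y ^ 2)⁻¹) y := by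
    simpa using hasDerivAt_inv hy
  have hpow : HasDerivAt (fun x : ℝ => (2 : ℝ) ^ (1 / x))
      ((2 : ℝ) ^ (1 / y) * log 2 * -(y ^ 2)⁻¹) y :=
    (hasStrictDerivAt_const_rpow (by norm_num) _).hasDerivAt.comp y hinv
  refine ((hasDerivAt_id' y).fun_mul (hpow.sub_const 1)).congr_deriv ?_
  field_simp
  ring

lemma rpow_mul_one_sub_log_div_sub_one_neg {y : ℝ} (hy : 0 < y) (hle : y ≤ log 2) :
    (2 : ℝ) ^ (1 / y) * (1 - log 2 / y) - 1 < 0 := by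
  have hfactor : 1 - log 2 / y ≤ 0 := sub_nonpos.mpr ((one_le_div hy).mpr hle)
  have hprod : (2 : ℝ) ^ (1 / y) * (1 - log 2 / y) ≤ 0 :=
    mul_nonpos_of_nonneg_of_nonpos (rpow_nonneg zero_le_two _) hfactor
  linarith

theorem stmt_3 :
    (∀ y : ℝ, 0 < y → y ≤ Real.log 2 →
      (2 : ℝ) ^ (1 / y) * (1 - Real.log 2 / y) - 1 < 0) ∧
    StrictAntiOn g (Set.Ioc (0 : ℝ) (Real.log 2)) := by
  refine ⟨fun y hy hle => rpow_mul_one_sub_log_div_sub_one_neg hy hle, ?_⟩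
  apply strictAntiOn_of_deriv_neg (convex_Ioc _ _)
  · exact fun y hy => (hasDerivAt_g hy.1.ne').continuousAt.continuousWithinAt
  · intro y hy
    rw [interior_Ioc] at hy
    rw [(hasDerivAt_g hy.1.ne').deriv]
    exact rpow_mul_one_sub_log_div_sub_one_neg hy.1 hy.2.le
end
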